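/- arXiv:2605.03542 — 2 statements merged into one kernel-verified Lean document; each statement's English description precedes it below -/
import Mathlib

section
/- Let d ≥ 1 be an integer, ε > 0, τ > 0, and let (λ_k)_{k≥1} be positive real numbers satisfying the Weyl bounds c k^{2/d} ≤ λ_k ≤ C k^{2/d} for all k, for some constants c, C > 0. Let (Ξ, 𝔉, μ) be a probability space and (w_k)_{k≥1} independent real random variables with mean zero and unit variance. Then, setting t = 1 − d/2 − ε, for μ-almost every ξ the series ∑_{k=1}^∞ τ² λ_k^{t} (1+λ_k)^{-1} w_k(ξ)² converges (is finite). -/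
open MeasureTheory ProbabilityTheory

/-- **Almost sure Sobolev regularity of the random test function.**
Let `d ≥ 1`, `ε > 0`, `τ > 0`, and let `(λ_k)` (with `lam 0` playing the role of `λ_1`)
be positive reals satisfying the Weyl bounds `c k^{2/d} ≤ λ_k ≤ C k^{2/d}`.  If `(w_k)`
are independent, square-integrable, mean-zero, unit-variance random variables then, with
`t = 1 - d/2 - ε`, for almost every `ξ` the series
`∑_k τ² λ_k^t (1+λ_k)⁻¹ w_k(ξ)²` converges. -/
theorem stmt_4 (d : ℕ) (hd : 1 ≤ d) (ε : ℝ) (hε : 0 < ε) (τ : ℝ) (hτ : 0 < τ)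
    (lam : ℕ → ℝ) (hpos : ∀ k, 0 < lam k)
    (c C : ℝ) (hc : 0 < c) (hC : 0 < C)
    (hweyl : ∀ k : ℕ, c * (((k : ℝ) + 1) ^ ((2 : ℝ) / d)) ≤ lam k ∧
      lam k ≤ C * (((k : ℝ) + 1) ^ ((2 : ℝ) / d)))
    {Ξ : Type*} [MeasurableSpace Ξ] (μ : Measure Ξ) [IsProbabilityMeasure μ]
    (w : ℕ → Ξ → ℝ) (hmeas : ∀ k, Measurable (w k))
    (hindep : iIndepFun w μ)
    (hL2 : ∀ k, MemLp (w k) 2 μ)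
    (hmean : ∀ k, ∫ ξ, w k ξ ∂μ = 0)
    (hvar : ∀ k, ∫ ξ, (w k ξ) ^ 2 ∂μ = 1) :
    ∀ᵐ ξ ∂μ, Summable fun k : ℕ =>
      τ ^ 2 * lam k ^ ((1 : ℝ) - (d : ℝ) / 2 - ε) * (1 + lam k)⁻¹ * w k ξ ^ 2 := by
  have hdpos : (0 : ℝ) < d := by exact_mod_cast Nat.lt_of_lt_of_le Nat.zero_lt_one hd
  set t : ℝ := 1 - (d : ℝ) / 2 - ε with ht
  set a : ℕ → ℝ := fun k => τ ^ 2 * lam k ^ t * (1 + lam k)⁻¹ with ha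
  have hanonneg : ∀ k, 0 ≤ a k := fun k => by
    have h1 : (0 : ℝ) ≤ lam k ^ t := Real.rpow_nonneg (hpos k).le _
    have h2 : (0 : ℝ) ≤ (1 + lam k)⁻¹ := by
      apply inv_nonneg.mpr; linarith [(hpos k).le]
    exact mul_nonneg (mul_nonneg (sq_nonneg τ) h1) h2
  -- deterministic summability
  have hasum : Summable a := by
    set s : ℝ := (d : ℝ) / 2 + ε with hs
    have hspos : 0 < s := by positivity
    have hbound : ∀ k, a k ≤ τ ^ 2 * c ^ (-s) * (((k : ℝ) + 1) ^ (-(1 + 2 * ε / d))) := by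
      intro k
      have hlk := hpos k
      have hlb := (hweyl k).1
      have hkp : (0 : ℝ) < (k : ℝ) + 1 := by positivity
      have h1 : (1 + lam k)⁻¹ ≤ (lam k)⁻¹ := by
        apply inv_anti₀ hlk; linarith
      have h2 : lam k ^ t * (1 + lam k)⁻¹ ≤ lam k ^ t * (lam k)⁻¹ := by
        apply mul_le_mul_of_nonneg_left h1 (Real.rpow_nonneg hlk.le _)
      have h3 : lam k ^ t * (lam k)⁻¹ = lam k ^ (-s) := by
        rw [← Real.rpow_neg_one (lam k), ← Real.rpow_add hlk]
        congr 1
        simp [ht, hs]; ring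
      have h4 : lam k ^ (-s) ≤ (c * (((k : ℝ) + 1) ^ ((2 : ℝ) / d))) ^ (-s) := by
        apply Real.rpow_le_rpow_of_nonpos _ hlb (by linarith)
        positivity
      have h5 : (c * (((k : ℝ) + 1) ^ ((2 : ℝ) / d))) ^ (-s)
          = c ^ (-s) * (((k : ℝ) + 1) ^ (-(1 + 2 * ε / d))) := by
        rw [Real.mul_rpow hc.le (by positivity), ← Real.rpow_mul hkp.le]
        congr 2
        field_simp [hs]
        ring
      calc a k = τ ^ 2 * (lam k ^ t * (1 + lam k)⁻¹) := by ring
        _ ≤ τ ^ 2 * (lam k ^ t * (lam k)⁻¹) := by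
            apply mul_le_mul_of_nonneg_left h2 (by positivity)
        _ = τ ^ 2 * lam k ^ (-s) := by rw [h3]
        _ ≤ τ ^ 2 * ((c * (((k : ℝ) + 1) ^ ((2 : ℝ) / d))) ^ (-s)) := by
            apply mul_le_mul_of_nonneg_left h4 (by positivity)
        _ = τ ^ 2 * c ^ (-s) * (((k : ℝ) + 1) ^ (-(1 + 2 * ε / d))) := by
            rw [h5]; ring
    have hsum2 : Summable (fun k : ℕ => (((k : ℝ) + 1) ^ (-(1 + 2 * ε / d)))) := by
      have : Summable (fun k : ℕ => ((k : ℝ) ^ (-(1 + 2 * ε / d)))) := by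
        rw [Real.summable_nat_rpow]
        have : 0 < 2 * ε / d := by positivity
        linarith
      have := (summable_nat_add_iff 1).mpr this
      exact_mod_cast this
    refine Summable.of_nonneg_of_le hanonneg hbound ?_
    exact hsum2.mul_left _
  -- probabilistic part
  have hwsq : ∀ k, Integrable (fun ξ => w k ξ ^ 2) μ := fun k => (hL2 k).integrable_sq
  have hmeas2 : ∀ k, Measurable fun ξ => w k ξ ^ 2 := fun k => (hmeas k).pow_const 2
  have hlin : ∀ k, ∫⁻ ξ, ENNReal.ofReal (a k * w k ξ ^ 2) ∂μ = ENNReal.ofReal (a k) := by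
    intro k
    have : ∫⁻ ξ, ENNReal.ofReal (a k * w k ξ ^ 2) ∂μ
        = ENNReal.ofReal (∫ ξ, a k * w k ξ ^ 2 ∂μ) := by
      rw [← ofReal_integral_eq_lintegral_ofReal ((hwsq k).const_mul _)]
      exact Filter.Eventually.of_forall fun ξ => mul_nonneg (hanonneg k) (sq_nonneg _)
    rw [this, integral_const_mul, hvar k, mul_one]
  have hkey : ∫⁻ ξ, ∑' k, ENNReal.ofReal (a k * w k ξ ^ 2) ∂μ ≠ ⊤ := by
    rw [lintegral_tsum fun k => ((hmeas2 k).const_mul _).ennreal_ofReal.aemeasurable]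
    simp_rw [hlin]
    rw [← ENNReal.ofReal_tsum_of_nonneg hanonneg hasum]
    exact ENNReal.ofReal_ne_top
  have hae : ∀ᵐ ξ ∂μ, (∑' k, ENNReal.ofReal (a k * w k ξ ^ 2)) ≠ ⊤ :=
    (ae_lt_top (by
      apply Measurable.ennreal_tsum
      exact fun k => ((hmeas2 k).const_mul _).ennreal_ofReal) hkey).mono
      fun ξ h => h.ne
  filter_upwards [hae] with ξ hξ
  have hnn : ∀ k, 0 ≤ a k * w k ξ ^ 2 := fun k => mul_nonneg (hanonneg k) (sq_nonneg _)
  have hsum : Summable fun k => (a k * w k ξ ^ 2).toNNReal := by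
    rw [← ENNReal.tsum_coe_ne_top_iff_summable]
    simpa [ENNReal.ofReal] using hξ
  have : Summable fun k => a k * w k ξ ^ 2 := by
    have := NNReal.summable_coe.mpr hsum
    convert this using 2 with k
    rw [Real.coe_toNNReal _ (hnn k)]
  exact this
end

section
/- Let d ≥ 1 and n ≥ 1 be integers and set h = 1/(n+1). For every multi-index k ∈ {1,…,n}^d, with λ_k = π² ∑_{j=1}^d k_j² and λ_k^{(h)} = (4/h²) ∑_{j=1}^d sin²(k_j π h / 2), one has 0 ≤ λ_k − λ_k^{(h)} ≤ (h²/12) · λ_k². In particular |λ_k^{(h)} − λ_k| ≤ C h² λ_k² with C = 1/12. -/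
noncomputable section

/-- The Dirichlet eigenvalue `λ_k = π² ∑_j k_j²` on the cube `(0,1)^d`. -/
def lamK (d : ℕ) (k : Fin d → ℕ) : ℝ := Real.pi ^ 2 * ∑ j, (k j : ℝ) ^ 2

/-- The eigenvalue `λ_k^{(h)} = (4/h²) ∑_j sin²(k_j π h / 2)` of the discretised
Dirichlet Laplacian with mesh size `h = 1/(n+1)`. -/
def lamKh (d n : ℕ) (k : Fin d → ℕ) : ℝ :=
  4 / (1 / (n + 1 : ℝ)) ^ 2 *
    ∑ j, Real.sin ((k j : ℝ) * Real.pi * (1 / (n + 1 : ℝ)) / 2) ^ 2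

/-!
Writing `λ_k = ∑_j t_j²` and `λ_k^{(h)} = ∑_j (4/h²) sin²(t_j h/2)` with `t_j = k_j π`, everything
reduces to the one-variable bounds `0 ≤ x² - sin² x ≤ x⁴/3`, taken at `x = t h/2`. The upper bound
comes from `x - x³/6 ≤ sin x ≤ x` via `x² - sin² x = (x - sin x)(x + sin x)`. Summing over `j`
gives `0 ≤ λ_k - λ_k^{(h)} ≤ (h²/12) ∑_j t_j⁴ ≤ (h²/12) λ_k²`.
-/

open Real Finset

theorem Real.sq_sub_sin_sq_le (x : ℝ) : x ^ 2 - sin x ^ 2 ≤ x ^ 4 / 3 := by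
  have of_nonneg : ∀ y : ℝ, 0 ≤ y → y ^ 2 - sin y ^ 2 ≤ y ^ 4 / 3 := by
    intro y hy
    have h_le : sin y ≤ y := sin_le hy
    have h_ge : y - y ^ 3 / 6 ≤ sin y := sin_ge_sub_cube hy
    have h_neg : -y ≤ sin y := (abs_le.1 (abs_sin_le_abs.trans_eq (abs_of_nonneg hy))).1
    calc y ^ 2 - sin y ^ 2 = (y - sin y) * (y + sin y) := by ring
      _ ≤ y ^ 3 / 6 * (2 * y) :=
        mul_le_mul (by linarith) (by linarith) (by linarith) (by positivity)
      _ = y ^ 4 / 3 := by ring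
  rcases le_total 0 x with hx | hx
  · exact of_nonneg x hx
  · simpa [sin_neg, neg_sq, Even.neg_pow (by decide : Even 4)] using
      of_nonneg (-x) (neg_nonneg.2 hx)

theorem four_div_sq_mul_sin_sq_le_sq (t h : ℝ) : 4 / h ^ 2 * sin (t * h / 2) ^ 2 ≤ t ^ 2 := by
  rcases eq_or_ne h 0 with rfl | hh
  · simpa using sq_nonneg t
  calc 4 / h ^ 2 * sin (t * h / 2) ^ 2 ≤ 4 / h ^ 2 * (t * h / 2) ^ 2 :=
        mul_le_mul_of_nonneg_left sin_sq_le_sq (by positivity)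
    _ = t ^ 2 := by field_simp; ring

theorem sq_sub_four_div_sq_mul_sin_sq_le (t : ℝ) {h : ℝ} (hh : h ≠ 0) :
    t ^ 2 - 4 / h ^ 2 * sin (t * h / 2) ^ 2 ≤ h ^ 2 / 12 * t ^ 4 :=
  calc t ^ 2 - 4 / h ^ 2 * sin (t * h / 2) ^ 2
        = 4 / h ^ 2 * ((t * h / 2) ^ 2 - sin (t * h / 2) ^ 2) := by field_simp; ring
    _ ≤ 4 / h ^ 2 * ((t * h / 2) ^ 4 / 3) := by gcongr; exact sq_sub_sin_sq_le _
    _ = h ^ 2 / 12 * t ^ 4 := by field_simp; ring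

namespace Finset

variable {ι : Type*} (s : Finset ι) (t : ι → ℝ)

theorem sum_four_div_sq_mul_sin_sq_le_sum_sq (h : ℝ) :
    ∑ i ∈ s, 4 / h ^ 2 * sin (t i * h / 2) ^ 2 ≤ ∑ i ∈ s, t i ^ 2 :=
  sum_le_sum fun i _ => four_div_sq_mul_sin_sq_le_sq (t i) h

theorem sum_sq_sub_sum_four_div_sq_mul_sin_sq_le {h : ℝ} (hh : h ≠ 0) :
    ∑ i ∈ s, t i ^ 2 - ∑ i ∈ s, 4 / h ^ 2 * sin (t i * h / 2) ^ 2 ≤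
      h ^ 2 / 12 * (∑ i ∈ s, t i ^ 2) ^ 2 :=
  calc ∑ i ∈ s, t i ^ 2 - ∑ i ∈ s, 4 / h ^ 2 * sin (t i * h / 2) ^ 2
        ≤ ∑ i ∈ s, h ^ 2 / 12 * (t i ^ 2) ^ 2 := by
          rw [← sum_sub_distrib]
          refine sum_le_sum fun i _ => ?_
          simpa [← pow_mul] using sq_sub_four_div_sq_mul_sin_sq_le (t i) hh
    _ ≤ h ^ 2 / 12 * (∑ i ∈ s, t i ^ 2) ^ 2 := by
          rw [← mul_sum]
          gcongr
          exact sum_sq_le_sq_sum_of_nonneg fun i _ => sq_nonneg (t i)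

end Finset

theorem lamK_eq_sum_sq (d : ℕ) (k : Fin d → ℕ) : lamK d k = ∑ j, ((k j : ℝ) * π) ^ 2 := by
  simp only [lamK, mul_sum, mul_pow, mul_comm]

theorem stmt_11_general (d n : ℕ)
    (k : Fin d → ℕ) :
    (0 ≤ lamK d k - lamKh d n k ∧
      lamK d k - lamKh d n k ≤ (1 / (n + 1 : ℝ)) ^ 2 / 12 * lamK d k ^ 2) ∧
    |lamKh d n k - lamK d k| ≤ 1 / 12 * (1 / (n + 1 : ℝ)) ^ 2 * lamK d k ^ 2 := by
  set h : ℝ := 1 / (n + 1 : ℝ)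
  have hh : h ≠ 0 := by positivity
  have hlamKh : lamKh d n k = ∑ j, 4 / h ^ 2 * sin ((k j : ℝ) * π * h / 2) ^ 2 := mul_sum _ _ _
  have hlow : 0 ≤ lamK d k - lamKh d n k := by
    rw [lamK_eq_sum_sq, hlamKh, sub_nonneg]
    exact sum_four_div_sq_mul_sin_sq_le_sum_sq _ _ h
  have hup : lamK d k - lamKh d n k ≤ h ^ 2 / 12 * lamK d k ^ 2 := by
    rw [lamK_eq_sum_sq, hlamKh]
    exact sum_sq_sub_sum_four_div_sq_mul_sin_sq_le _ _ hh
  refine ⟨⟨hlow, hup⟩, ?_⟩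
  rw [abs_sub_comm, abs_of_nonneg hlow]
  linarith

/-- **Second-order convergence of the discrete eigenvalues.**
For `k ∈ {1,…,n}^d` and `h = 1/(n+1)`,
`0 ≤ λ_k - λ_k^{(h)} ≤ (h²/12) λ_k²`, and in particular
`|λ_k^{(h)} - λ_k| ≤ (1/12) h² λ_k²`. -/
theorem stmt_11 (d n : ℕ) (hd : 1 ≤ d) (hn : 1 ≤ n)
    (k : Fin d → ℕ) (hk : ∀ j, 1 ≤ k j ∧ k j ≤ n) :
    (0 ≤ lamK d k - lamKh d n k ∧
      lamK d k - lamKh d n k ≤ (1 / (n + 1 : ℝ)) ^ 2 / 12 * lamK d k ^ 2) ∧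
    |lamKh d n k - lamK d k| ≤ 1 / 12 * (1 / (n + 1 : ℝ)) ^ 2 * lamK d k ^ 2 :=
  stmt_11_general d n k

end
end
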